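/- arXiv:2002.06650 — 9 statements merged into one kernel-verified Lean document; each statement's English description precedes it below -/
import Mathlib

section
/- Any (2/ε)-selective subset R of P is an ε-coreset for the nearest-neighbor rule: for every query point q ∈ X, the label of q's exact nearest neighbor in R equals the label of some ε-approximate nearest neighbor of q in P. -/
open Metric

variable {X : Type*} [MetricSpace X]

/-- Nearest-neighbor distance of `q` in the set `S`. -/
noncomputable def dnn (q : X) (S : Finset X) : ℝ :=
  Metric.infDist q (S : Set X)

/-- Nearest-enemy distance of `q` in `S`, relative to the class `c`. -/
noncomputable def dne (l : X → ℕ) (c : ℕ) (q : X) (S : Finset X) : ℝ :=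
  Metric.infDist q {x ∈ (S : Set X) | l x ≠ c}

/-- any (2/ε)-selective subset is an ε-coreset for the
nearest-neighbor rule. -/
theorem stmt3 (l : X → ℕ) (P R : Finset X) (ε : ℝ)
    (hε : 0 < ε) (hRP : R ⊆ P)
    (hsel : ∀ p ∈ P, dnn p R < dne l (l p) p P / (1 + 2/ε) ∧
      ∀ r ∈ R, dist p r = dnn p R → l r = l p) :
    ∀ q : X, ∀ r ∈ R, dist q r = dnn q R →
      ∃ p ∈ P, dist q p ≤ (1 + ε) * dnn q P ∧ l p = l r := by
  intro q r hrR hqr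
  have hrP : r ∈ P := hRP hrR
  have hPne : (P : Set X).Nonempty := ⟨r, hrP⟩
  obtain ⟨p, hpP, hp⟩ := (P.finite_toSet.isCompact).exists_infDist_eq_dist hPne q
  have hp' : dnn q P = dist q p := hp
  by_cases hcase : dist q r ≤ (1 + ε) * dnn q P
  · exact ⟨r, hrP, hcase, rfl⟩
  · push_neg at hcase
    have h0 : (0:ℝ) ≤ dnn q P := Metric.infDist_nonneg
    refine ⟨p, hpP, by nlinarith, ?_⟩
    obtain ⟨hs1, hs2⟩ := hsel p hpP
    have hRne : (R : Set X).Nonempty := ⟨r, hrR⟩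
    obtain ⟨r', hr'R, hr'⟩ := (R.finite_toSet.isCompact).exists_infDist_eq_dist hRne p
    have hlr' : l r' = l p := hs2 r' hr'R hr'.symm
    by_contra hne'
    have hne : l r ≠ l p := fun e => hne' e.symm
    have hE : dne l (l p) p P ≤ dist p r :=
      Metric.infDist_le_dist_of_mem ⟨hrP, hne⟩
    have hA : dnn q R ≤ dist q r' := Metric.infDist_le_dist_of_mem hr'R
    have hB : dist q r' ≤ dist q p + dist p r' := dist_triangle _ _ _
    have hC : dist p r' = dnn p R := hr'.symm
    have hF : dist p r ≤ dist p q + dist q r := dist_triangle _ _ _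
    have hpq : dist p q = dist q p := dist_comm _ _
    have h2e : (0:ℝ) < 1 + 2/ε := by positivity
    have hD2 : dnn p R * (ε + 2) < dne l (l p) p P * ε := by
      have h := (lt_div_iff₀ h2e).mp hs1
      have : dnn p R * (1 + 2/ε) * ε = dnn p R * (ε + 2) := by
        field_simp
      nlinarith
    nlinarith [hcase, hqr, hp', hA, hB, hC, hF, hE, hD2]
end

section
/- In the case analysis of the coreset theorem: if R is α-selective and q ∈ X satisfies δ(q,P) < ε with α = 2/ε, then dnn(q,R) < (1+ε)·dnn(q,P); that is, the nearest neighbor of q in R is an ε-approximate nearest neighbor of q in P. -/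
open Metric

variable {X : Type*} [MetricSpace X]

/-- the approximation case of the coreset theorem: if R is
(2/ε)-selective and δ(q,P) < ε then dnn(q,R) < (1+ε)·dnn(q,P). -/
theorem stmt4 (l : X → ℕ) (P R : Finset X) (ε : ℝ) (q p : X)
    (hε : 0 < ε) (hRP : R ⊆ P)
    (hsel : ∀ x ∈ P, ∃ r ∈ R, l r = l x ∧ dist x r < dne l (l x) x P / (1 + 2/ε))
    (hp : p ∈ P) (hnnP : dist q p = dnn q P) (hq : 0 < dnn q P)
    (hδ : dne l (l p) q P / dnn q P - 1 < ε) :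
    dnn q R < (1 + ε) * dnn q P := by
  obtain ⟨r, hrR, hlr, hdr⟩ := hsel p hp
  have hα : 0 < 1 + 2/ε := by positivity
  have h1 : dnn q R ≤ dist q p + dist p r := by
    have : dnn q R ≤ dist q r :=
      Metric.infDist_le_dist_of_mem (by exact_mod_cast hrR)
    calc dnn q R ≤ dist q r := this
      _ ≤ dist q p + dist p r := dist_triangle q p r
  have h2 : dne l (l p) p P ≤ dist q p + dne l (l p) q P := by
    have := Metric.infDist_le_infDist_add_dist (x := p) (y := q)
      (s := {x ∈ (P : Set X) | l x ≠ l p})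
    simpa [dne, dist_comm p q, add_comm] using this
  have h3 : dne l (l p) q P < (1 + ε) * dnn q P := by
    have := (div_lt_iff₀ hq).mp (by linarith : dne l (l p) q P / dnn q P < 1 + ε)
    linarith
  have hdr' : dist p r * (1 + 2/ε) < dne l (l p) p P := (lt_div_iff₀ hα).mp hdr
  have he : ε * (2/ε) = 2 := by field_simp
  nlinarith [mul_pos hε hq, hnnP,
    mul_le_mul_of_nonneg_left h2 hε.le, mul_lt_mul_of_pos_left hdr' hε,
    mul_lt_mul_of_pos_left h3 hε, mul_le_mul_of_nonneg_left h1 hε.le]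
end

section
/- For a query point q with chromatic density δ(q,P) ≥ ε and an α-selective subset R with α = 2/ε, the chromatic density δ(q,R) is strictly positive; hence the nearest neighbor of q in R has the same label as the nearest neighbor of q in P. -/
open Metric

variable {X : Type*} [MetricSpace X]

/-- the correct-classification case of the coreset theorem:
if R is (2/ε)-selective and δ(q,P) ≥ ε then δ(q,R) > 0, hence the nearest
neighbor of q in R has the same label as the nearest neighbor of q in P. -/
theorem stmt5 (l : X → ℕ) (P R : Finset X) (ε : ℝ) (q p r : X)
    (hε : 0 < ε) (hRP : R ⊆ P)
    (hsel : ∀ x ∈ P, ∃ y ∈ R, l y = l x ∧ dist x y < dne l (l x) x P / (1 + 2/ε))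
    (hp : p ∈ P) (hnnP : dist q p = dnn q P)
    (hr : r ∈ R) (hnnR : dist q r = dnn q R)
    (hδ : ε ≤ dne l (l p) q P / dnn q P - 1) :
    0 < dne l (l r) q R / dnn q R - 1 ∧ l r = l p := by
  set D : ℝ := dnn q P with hD
  set E : ℝ := dne l (l p) q P with hE
  have hα : (0:ℝ) < 1 + 2/ε := by positivity
  -- D > 0
  have hD0 : 0 < D := by
    rcases lt_or_eq_of_le (hnnP ▸ dist_nonneg : (0:ℝ) ≤ D) with h | h
    · exact h
    · exfalso; rw [← h, div_zero] at hδ; linarith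
  -- E ≥ (1+ε) D
  have hED : (1 + ε) * D ≤ E := by
    have := (le_div_iff₀ hD0).mp (by linarith : (1 + ε) ≤ E / D)
    linarith
  have hE0 : 0 < E := lt_of_lt_of_le (by nlinarith) hED
  -- P-enemy set nonempty
  have hPne : ({x ∈ (P : Set X) | l x ≠ l p}).Nonempty := by
    by_contra h
    rw [Set.not_nonempty_iff_eq_empty] at h
    rw [hE, dne, h, Metric.infDist_empty] at hE0
    exact lt_irrefl _ hE0
  obtain ⟨e, heP, hel⟩ := hPne
  -- selective witness for p
  obtain ⟨y, hyR, hyl, hydist⟩ := hsel p hp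
  have hpP : dne l (l p) p P ≤ E + D := by
    have h : dne l (l p) p P ≤ E + dist p q := Metric.infDist_le_infDist_add_dist
    rw [dist_comm, hnnP] at h
    exact h
  have hpy : dist p y < (E + D) / (1 + 2/ε) :=
    lt_of_lt_of_le hydist (div_le_div_of_nonneg_right hpP hα.le |>.trans_eq rfl)
  have hqy : dist q y ≤ D + dist p y := by
    have := dist_triangle q p y
    rw [hnnP] at this; linarith
  -- the key bound: dnn q R < E
  have harith : D + (E + D) / (1 + 2/ε) ≤ E := by
    have h1 : (E + D) / (1 + 2/ε) * (1 + 2/ε) = E + D :=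
      div_mul_cancel₀ _ (ne_of_gt hα)
    have h2 : (2/ε) * ε = 2 := div_mul_cancel₀ _ (ne_of_gt hε)
    nlinarith [Metric.infDist_nonneg (x := q) (s := {x ∈ (P : Set X) | l x ≠ l p}),
      div_nonneg (by linarith [hE0, hD0] : (0:ℝ) ≤ E + D) (le_of_lt hα)]
  have hRlt : dnn q R < E := by
    have h1 : dnn q R ≤ dist q y := Metric.infDist_le_dist_of_mem (by exact_mod_cast hyR)
    linarith
  -- l r = l p
  have hlr : l r = l p := by
    by_contra h
    have hrEn : r ∈ {x ∈ (P : Set X) | l x ≠ l p} := ⟨by exact_mod_cast hRP hr, h⟩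
    have : E ≤ dist q r := Metric.infDist_le_dist_of_mem hrEn
    rw [hnnR] at this; linarith
  -- dnn q R > 0
  have hRD : D ≤ dnn q R :=
    Metric.infDist_le_infDist_of_subset (by exact_mod_cast hRP) ⟨r, by exact_mod_cast hr⟩
  have hR0 : 0 < dnn q R := lt_of_lt_of_le hD0 hRD
  -- R-enemy set nonempty, and its infDist ≥ E
  obtain ⟨y', hy'R, hy'l, _⟩ := hsel e heP
  have hRene : ({x ∈ (R : Set X) | l x ≠ l p}).Nonempty :=
    ⟨y', by exact_mod_cast hy'R, by rw [hy'l]; exact hel⟩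
  have hsub : {x ∈ (R : Set X) | l x ≠ l p} ⊆ {x ∈ (P : Set X) | l x ≠ l p} :=
    fun x hx => ⟨by exact_mod_cast hRP (by exact_mod_cast hx.1), hx.2⟩
  have hEle : E ≤ dne l (l p) q R :=
    Metric.infDist_le_infDist_of_subset hsub hRene
  refine ⟨?_, hlr⟩
  rw [hlr]
  have : 1 < dne l (l p) q R / dnn q R := (one_lt_div hR0).mpr (by linarith)
  linarith
end

section
/- Any α-selective subset R of P is an (ξ,ε)-coreset for the approximate nearest-neighbor rule when α = (εξ + 3ξ + 2)/(ε − ξ), for 0 ≤ ξ < ε: for every query point q ∈ X, the label of any ξ-approximate nearest neighbor of q in R equals the label of some ε-approximate nearest neighbor of q in P. -/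
open Metric

variable {X : Type*} [MetricSpace X]

/-- any α-selective subset with α = (εξ + 3ξ + 2)/(ε − ξ) is an
(ξ,ε)-coreset for the approximate nearest-neighbor rule. -/
theorem stmt6 (l : X → ℕ) (P R : Finset X) (ξ ε : ℝ)
    (hξ : 0 ≤ ξ) (hξε : ξ < ε) (hRP : R ⊆ P)
    (hsel : ∀ p ∈ P, ∃ r ∈ R, l r = l p ∧
      dist p r < dne l (l p) p P / (1 + (ε*ξ + 3*ξ + 2)/(ε - ξ))) :
    ∀ q : X, ∀ r ∈ R, dist q r ≤ (1 + ξ) * dnn q R →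
      ∃ p ∈ P, dist q p ≤ (1 + ε) * dnn q P ∧ l p = l r := by
  intro q r hr hqr
  have hrP : r ∈ P := hRP hr
  have hPne : (P : Set X).Nonempty := ⟨r, hrP⟩
  obtain ⟨p, hpP, hp⟩ := P.finite_toSet.isCompact.exists_infDist_eq_dist hPne q
  have hpP' : p ∈ P := hpP
  have hd : dnn q P = dist q p := hp
  by_cases hlab : l p = l r
  · refine ⟨p, hpP', ?_, hlab⟩
    have hnn : 0 ≤ dist q p := dist_nonneg
    nlinarith [hd]
  · refine ⟨r, hrP, ?_, rfl⟩
    obtain ⟨r', hr'R, hr'lab, hr'd⟩ := hsel p hpP'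
    have hεξ : (0:ℝ) < ε - ξ := by linarith
    set α : ℝ := (ε*ξ + 3*ξ + 2)/(ε - ξ) with hα
    have hαpos : 0 < α := div_pos (by nlinarith) hεξ
    have hαval : α * (ε - ξ) = ε*ξ + 3*ξ + 2 := div_mul_cancel₀ _ (ne_of_gt hεξ)
    have h1 : dnn q R ≤ dist q r' :=
      Metric.infDist_le_dist_of_mem (by exact_mod_cast hr'R)
    have h2 : dne l (l p) p P ≤ dist p r := by
      apply Metric.infDist_le_dist_of_mem
      exact ⟨hrP, fun h => hlab h.symm⟩
    have h3 : dist q r' ≤ dist q p + dist p r' := dist_triangle q p r'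
    have h4 : dist p r ≤ dist p q + dist q r := dist_triangle p q r
    have h5 : dist p r' * (1 + α) < dne l (l p) p P :=
      (lt_div_iff₀ (by linarith)).mp hr'd
    have hcomm : dist p q = dist q p := dist_comm p q
    rw [hd]
    nlinarith [dist_nonneg (x := q) (y := p), dist_nonneg (x := q) (y := r),
      dist_nonneg (x := p) (y := r'),
      mul_le_mul_of_nonneg_left h1 (by linarith : (0:ℝ) ≤ 1 + ξ),
      mul_lt_mul_of_pos_left h5 (by linarith : (0:ℝ) < 1 + ξ),
      mul_pos hεξ hαpos,
      mul_le_mul_of_nonneg_left (le_trans h2 h4) (by linarith : (0:ℝ) ≤ (1+ξ)),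
      sq_nonneg (dist q r - (1+ε)*dist q p)]
end

section
/- Any α-consistent subset R of P correctly classifies every query point whose chromatic density with respect to P is at least 2/α: if δ(q,P) ≥ 2/α, then δ(q,R) > 0, i.e., the nearest neighbor of q in R has the same label as the nearest neighbor of q in P. -/
open Metric

variable {X : Type*} [MetricSpace X]

/-- an α-consistent subset correctly classifies every query point
with chromatic density at least 2/α w.r.t. P. -/
theorem stmt7 (l : X → ℕ) (P R : Finset X) (α : ℝ) (q p r : X)
    (hα : 0 < α) (hRP : R ⊆ P)
    (hcons : ∀ x ∈ P, dnn x R < dne l (l x) x R / (1 + α))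
    (hp : p ∈ P) (hnnP : dist q p = dnn q P)
    (hr : r ∈ R) (hnnR : dist q r = dnn q R)
    (hδ : 2/α ≤ dne l (l p) q P / dnn q P - 1) :
    0 < dne l (l r) q R / dnn q R - 1 ∧ l r = l p := by
  have h1α : (0:ℝ) < 1 + α := by linarith
  have hγ0 : 0 ≤ dnn q P := Metric.infDist_nonneg
  have h2α : 0 < 2/α := by positivity
  -- dnn q P > 0
  have hγpos : 0 < dnn q P := by
    rcases lt_or_eq_of_le hγ0 with h | h
    · exact h
    · exfalso
      rw [← h, div_zero] at hδ
      linarith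
  -- α * ε ≥ (2+α) * γ
  have hεγ : (2 + α) * dnn q P ≤ α * dne l (l p) q P := by
    have h1 : (2/α + 1) * dnn q P ≤ dne l (l p) q P := by
      rw [← le_div_iff₀ hγpos]; linarith
    have h2 : α * ((2/α + 1) * dnn q P) ≤ α * dne l (l p) q P :=
      mul_le_mul_of_nonneg_left h1 hα.le
    have h3 : α * (2/α) = 2 := by field_simp
    nlinarith
  -- consistency at p
  have hconsp := hcons p hp
  have hnn0 : 0 ≤ dnn p R := Metric.infDist_nonneg
  have hBp : 0 < dne l (l p) p R := by
    have h := lt_of_le_of_lt hnn0 hconsp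
    have h2 := mul_pos h h1α
    rwa [div_mul_cancel₀ _ (ne_of_gt h1α)] at h2
  -- the enemy set of l p in R is nonempty
  have hne : {x ∈ (R : Set X) | l x ≠ l p}.Nonempty := by
    by_contra h
    rw [Set.not_nonempty_iff_eq_empty] at h
    have : dne l (l p) p R = 0 := by
      unfold dne; rw [h, Metric.infDist_empty]
    linarith
  have hsub : {x ∈ (R : Set X) | l x ≠ l p} ⊆ {x ∈ (P : Set X) | l x ≠ l p} :=
    fun x hx => ⟨hRP hx.1, hx.2⟩
  -- B ≥ ε
  have hBε : dne l (l p) q P ≤ dne l (l p) q R :=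
    Metric.infDist_le_infDist_of_subset hsub hne
  -- Lipschitz bounds
  have hA : dnn q R ≤ dnn p R + dist q p := Metric.infDist_le_infDist_add_dist
  have hB' : dne l (l p) p R ≤ dne l (l p) q R + dist p q :=
    Metric.infDist_le_infDist_add_dist
  have hdc : dist p q = dist q p := dist_comm p q
  -- dnn q R ≥ dnn q P
  have hAγ : dnn q P ≤ dnn q R :=
    Metric.infDist_le_infDist_of_subset (Finset.coe_subset.2 hRP) ⟨r, hr⟩
  -- main inequality : dnn q R < dne l (l p) q R
  have hmain : dnn q R < dne l (l p) q R := by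
    have hcons' : (1 + α) * dnn p R < dne l (l p) p R := by
      rw [lt_div_iff₀ h1α] at hconsp; linarith [hconsp]
    nlinarith [hnnP, hεγ, hBε, hA, hB', hAγ]
  -- labels agree
  have hlabel : l r = l p := by
    by_contra h
    have : dne l (l p) q R ≤ dist q r :=
      Metric.infDist_le_dist_of_mem ⟨by exact_mod_cast hr, h⟩
    rw [hnnR] at this
    linarith
  refine ⟨?_, hlabel⟩
  rw [hlabel]
  have hApos : 0 < dnn q R := lt_of_lt_of_le hγpos hAγ
  have : 1 < dne l (l p) q R / dnn q R := (one_lt_div hApos).2 hmain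
  linarith
end

section
/- If R ⊆ P is α-selective and q ∈ S_{p,α} = {r ∈ P : d(r,p) < dne(r,P)/(1+α)} for some p ∈ P, then the nearest-enemy distances of p and q are related by ((1+α)/(2+α))·dne(p,P) ≤ dne(q,P) ≤ ((1+α)/α)·dne(p,P). -/
open Metric

variable {X : Type*} [MetricSpace X]

/-! Since `d(q,p) < dne(q)`, `p` is not an enemy of `q`, so `p` and `q` share a label and hence
a set of enemies. The distance to that set is `1`-Lipschitz, and feeding
`d(q,p) < dne(q)/(1+α)` into `|dne(p) - dne(q)| ≤ d(p,q)` gives both bounds. -/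

section NearestEnemy

variable (l : X → ℕ) (c : ℕ) (S : Finset X)

theorem dne_nonneg (x : X) : 0 ≤ dne l c x S :=
  infDist_nonneg

theorem dne_le_dne_add_dist (x y : X) : dne l c x S ≤ dne l c y S + dist x y :=
  infDist_le_infDist_add_dist

variable {l S}

theorem label_eq_of_dist_lt_dne {p q : X} (hp : p ∈ S) (h : dist q p < dne l (l q) q S) :
    l p = l q := by
  by_contra hne
  have hmem : p ∈ {x ∈ (S : Set X) | l x ≠ l q} := ⟨hp, hne⟩
  exact (infDist_le_dist_of_mem hmem).not_gt h

variable {c} {α : ℝ} {p q : X}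

theorem mul_dne_le_dne_of_dist_lt (hα : 0 < 1 + α) (h : dist q p < dne l c q S / (1 + α)) :
    (1 + α) / (2 + α) * dne l c p S ≤ dne l c q S := by
  have hp := dne_le_dne_add_dist l c S p q
  rw [dist_comm] at hp
  rw [lt_div_iff₀ hα] at h
  rw [div_mul_eq_mul_div, div_le_iff₀ (by linarith)]
  nlinarith

theorem dne_le_mul_dne_of_dist_lt (hα : 0 < α) (h : dist q p < dne l c q S / (1 + α)) :
    dne l c q S ≤ (1 + α) / α * dne l c p S := by
  have hq := dne_le_dne_add_dist l c S q p
  rw [lt_div_iff₀ (by linarith)] at h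
  rw [div_mul_eq_mul_div, le_div_iff₀ hα]
  nlinarith

end NearestEnemy

theorem stmt8_general (l : X → ℕ) (P : Finset X) (α : ℝ) (p q : X)
    (hα : 0 < α) (hp : p ∈ P)
    (hS : dist q p < dne l (l q) q P / (1 + α)) :
    (1 + α) / (2 + α) * dne l (l p) p P ≤ dne l (l q) q P ∧
      dne l (l q) q P ≤ (1 + α) / α * dne l (l p) p P := by
  have hα₁ : 0 < 1 + α := by linarith
  have hlabel : l p = l q :=
    label_eq_of_dist_lt_dne hp (hS.trans_le (div_le_self (dne_nonneg ..) (by linarith)))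
  rw [hlabel]
  exact ⟨mul_dne_le_dne_of_dist_lt hα₁ hS, dne_le_mul_dne_of_dist_lt hα hS⟩

/-- if q ∈ S_{p,α}, i.e. d(q,p) < dne(q,P)/(1+α), then
((1+α)/(2+α))·dne(p,P) ≤ dne(q,P) ≤ ((1+α)/α)·dne(p,P). -/
theorem stmt8 (l : X → ℕ) (P R : Finset X) (α : ℝ) (p q : X)
    (hα : 0 < α) (hRP : R ⊆ P)
    (hclasses : ∃ a ∈ P, ∃ b ∈ P, l a ≠ l b)
    (hsel : ∀ x ∈ P, ∃ r ∈ R, l r = l x ∧ dist x r < dne l (l x) x P / (1 + α))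
    (hp : p ∈ P) (hq : q ∈ P)
    (hS : dist q p < dne l (l q) q P / (1 + α)) :
    (1 + α) / (2 + α) * dne l (l p) p P ≤ dne l (l q) q P ∧
      dne l (l q) q P ≤ (1 + α) / α * dne l (l p) p P :=
  stmt8_general l P α p q hα hp hS
end

section
/- In Euclidean space ℝ^d, for two points a, b selected by α-RSS that are both covered by a point p of an optimal α-selective subset (i.e., ‖a−p‖ < dne(a)/(1+α) and ‖b−p‖ < dne(b)/(1+α)), with dne(a) ≤ dne(b) and ‖a−b‖ ≥ dne(b)/(1+α), the angle ∠apb is at least π/3. -/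
open Real EuclideanGeometry

/-- if a and b are α-RSS points covered by an optimal point p,
i.e. ‖a−p‖ < dne(a)/(1+α) and ‖b−p‖ < dne(b)/(1+α), with dne(a) ≤ dne(b) and
‖a−b‖ ≥ dne(b)/(1+α), then the angle ∠ a p b is at least π/3. -/
theorem stmt12 (d : ℕ) (α dnea dneb : ℝ) (a b p : EuclideanSpace ℝ (Fin d))
    (hα : 0 ≤ α) (hdnea : 0 < dnea) (hdab : dnea ≤ dneb)
    (h1 : dist a p < dnea / (1 + α)) (h2 : dist b p < dneb / (1 + α))
    (h3 : dneb / (1 + α) ≤ dist a b) :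
    π / 3 ≤ ∠ a p b := by
  have h1α : (0:ℝ) < 1 + α := by linarith
  have hap : dist a p < dist a b := by
    have : dnea / (1 + α) ≤ dneb / (1 + α) := by gcongr
    linarith
  have hbp : dist b p < dist a b := by linarith
  by_contra h
  push_neg at h
  have hcos : (1:ℝ)/2 < Real.cos (∠ a p b) := by
    have := Real.cos_lt_cos_of_nonneg_of_le_pi (EuclideanGeometry.angle_nonneg a p b)
      (by linarith [Real.pi_pos] : π/3 ≤ π) h
    rwa [Real.cos_pi_div_three] at this
  have law := EuclideanGeometry.law_cos a p b
  nlinarith [dist_nonneg (x := a) (y := p), dist_nonneg (x := b) (y := p),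
    dist_nonneg (x := a) (y := b), mul_nonneg (dist_nonneg (x := a) (y := p)) (dist_nonneg (x := b) (y := p))]
end

section
/- In ℝ^d, let p be a nearest-enemy point and let p_i, p_j be two points selected by α-RSS with nearest enemy p, satisfying dne(p_i) ≤ dne(p_j) ≤ b·dne(p_i) where b = (1+α)²/(α(2+α)), dne(x) = ‖x−p‖, and (1+α)‖p_j − p_i‖ ≥ dne(p_j). Then the angle ∠ p_i p p_j is at least 2·arcsin(1/(2(1+α))). -/
open Real EuclideanGeometry

/-- if p is the common nearest-enemy point of two α-RSS points
p₁, p₂ with ‖p₁−p‖ ≤ ‖p₂−p‖ ≤ b‖p₁−p‖ for b = (1+α)²/(α(2+α)), and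
(1+α)‖p₂−p₁‖ ≥ ‖p₂−p‖, then the angle ∠ p₁ p p₂ is at least
2·arcsin(1/(2(1+α))). -/
theorem stmt15 (d : ℕ) (α : ℝ) (p p₁ p₂ : EuclideanSpace ℝ (Fin d))
    (hα : 0 < α) (hne₁ : p₁ ≠ p) (hne₂ : p₂ ≠ p)
    (h1 : dist p₁ p ≤ dist p₂ p)
    (h2 : dist p₂ p ≤ (1 + α) ^ 2 / (α * (2 + α)) * dist p₁ p)
    (h3 : dist p₂ p ≤ (1 + α) * dist p₂ p₁) :
    2 * arcsin (1 / (2 * (1 + α))) ≤ ∠ p₁ p p₂ := by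
  have hA : (0:ℝ) < 1 + α := by linarith
  have hapos : 0 < dist p₁ p := dist_pos.2 hne₁
  have hbpos : 0 < dist p₂ p := dist_pos.2 hne₂
  set a := dist p₁ p with ha
  set b := dist p₂ p with hb
  set c := dist p₂ p₁ with hc
  have hcnn : 0 ≤ c := dist_nonneg
  have hcsq : b ^ 2 ≤ (1 + α) ^ 2 * c ^ 2 := by nlinarith
  rw [div_mul_eq_mul_div, le_div_iff₀ (by positivity)] at h2
  -- h2 : b * (α * (2 + α)) ≤ (1 + α) ^ 2 * a
  have key : 0 ≤ (b - a) * ((1 + α) ^ 2 * a - α * (2 + α) * b) :=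
    mul_nonneg (by linarith) (by linarith)
  have hlaw := EuclideanGeometry.law_cos p₂ p p₁
  rw [EuclideanGeometry.angle_comm p₂ p p₁] at hlaw
  -- hlaw : c ^ 2 = b ^ 2 + a ^ 2 - 2 * b * a * cos (∠ p₁ p p₂)
  have hcos : Real.cos (∠ p₁ p p₂) ≤ 1 - 1 / (2 * (1 + α) ^ 2) := by
    rw [show (1:ℝ) - 1 / (2 * (1 + α) ^ 2) = (2 * (1 + α) ^ 2 - 1) / (2 * (1 + α) ^ 2) by
      field_simp]
    rw [le_div_iff₀ (by positivity)]
    nlinarith [mul_pos hapos hbpos]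
  have ht0 : (0:ℝ) ≤ 1 / (2 * (1 + α)) := by positivity
  have ht1 : 1 / (2 * (1 + α)) ≤ 1 := by
    rw [div_le_one (by positivity)]; linarith
  have hψcos : Real.cos (2 * arcsin (1 / (2 * (1 + α)))) = 1 - 1 / (2 * (1 + α) ^ 2) := by
    rw [Real.cos_two_mul, Real.cos_arcsin, Real.sq_sqrt (by nlinarith)]
    field_simp
    ring
  have hψ0 : 0 ≤ 2 * arcsin (1 / (2 * (1 + α))) := by
    have := Real.arcsin_nonneg.2 ht0; linarith
  have hψπ : 2 * arcsin (1 / (2 * (1 + α))) ≤ π := by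
    have := Real.arcsin_le_pi_div_two (1 / (2 * (1 + α))); linarith
  by_contra hcon
  push_neg at hcon
  have hmono := Real.strictAntiOn_cos
    ⟨EuclideanGeometry.angle_nonneg _ _ _, EuclideanGeometry.angle_le_pi _ _ _⟩
    ⟨hψ0, hψπ⟩ hcon
  rw [hψcos] at hmono
  linarith
end

section
/- Separation property of the α-SFCNN selection: if a, b are two distinct points selected by α-SFCNN with dne(a) ≥ β and dne(b) ≥ β for some β ≥ 0, then d(a,b) ≥ β/(1+α). -/
open Metric

variable {X : Type*} [MetricSpace X]

private lemma stmt17_aux [DecidableEq X] (l : X → ℕ) (P : Finset X) (α β : ℝ) (L : List X)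
    (hα : 0 ≤ α) (hβ : 0 ≤ β)
    (hLP : ∀ x ∈ L, x ∈ P) (hnd : L.Nodup)
    (hstep : ∀ (i : ℕ) (hi : i < L.length),
      ∀ p ∈ (L.take i).toFinset,
        dist (L.get ⟨i, hi⟩) p = dnn (L.get ⟨i, hi⟩) (L.take i).toFinset →
        l (L.get ⟨i, hi⟩) = l p →
          (∃ e ∈ (L.take i).toFinset, l e ≠ l (L.get ⟨i, hi⟩)) ∧
          dne l (l (L.get ⟨i, hi⟩)) (L.get ⟨i, hi⟩) (L.take i).toFinset /
              dnn (L.get ⟨i, hi⟩) (L.take i).toFinset - 1 < α)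
    (a b : X) (ha : a ∈ L) (hb : b ∈ L) (hab : a ≠ b)
    (hdneb : β ≤ dne l (l b) b P)
    (hord : L.idxOf a < L.idxOf b) :
    β / (1 + α) ≤ dist a b := by
  have h1α : (0:ℝ) < 1 + α := by linarith
  set ia := L.idxOf a with hia
  set ib := L.idxOf b with hib
  have hibl : ib < L.length := List.idxOf_lt_length_iff.2 hb
  have hial : ia < L.length := List.idxOf_lt_length_iff.2 ha
  have hgetb : L.get ⟨ib, hibl⟩ = b := by
    simp [List.get_eq_getElem, hib, List.getElem_idxOf]
  -- a is in the prefix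
  have haS : a ∈ (L.take ib).toFinset := by
    rw [List.mem_toFinset, List.mem_iff_getElem]
    refine ⟨ia, ?_, ?_⟩
    · simpa [List.length_take] using ⟨hord, hial⟩
    · rw [List.getElem_take]
      simpa [hia] using List.getElem_idxOf hial
  -- b is not in the prefix
  have hbS : b ∉ (L.take ib).toFinset := by
    rw [List.mem_toFinset, List.mem_iff_getElem]
    rintro ⟨j, hj, hjb⟩
    have hjlt : j < ib := lt_of_lt_of_le hj (by simp [List.length_take])
    have hjL : j < L.length := lt_trans hjlt hibl
    have : L[j] = L[ib] := by
      rw [List.getElem_take] at hjb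
      rw [hjb]; exact (List.getElem_idxOf hibl).symm
    exact absurd ((hnd.getElem_inj_iff).1 this) (Nat.ne_of_lt hjlt)
  have hSne : ((L.take ib).toFinset : Set X).Nonempty := ⟨a, by simpa using haS⟩
  have hScpt : IsCompact ((L.take ib).toFinset : Set X) :=
    ((L.take ib).toFinset.finite_toSet).isCompact
  obtain ⟨p, hpS, hpd⟩ := hScpt.exists_infDist_eq_dist hSne b
  have hpSf : p ∈ (L.take ib).toFinset := by simpa using hpS
  have hpP : p ∈ P := hLP p (List.mem_of_mem_take (List.mem_toFinset.1 hpSf))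
  have hdnnle : dnn b (L.take ib).toFinset ≤ dist b a :=
    Metric.infDist_le_dist_of_mem (by simpa using haS)
  by_cases hlab : l b = l p
  · -- same label: use the selection rule
    obtain ⟨⟨e, heS, hel⟩, hlt⟩ := hstep ib hibl p hpSf (by rw [hgetb]; exact hpd.symm) (by rw [hgetb]; exact hlab)
    rw [hgetb] at hlt hel
    -- dnn positive
    have hpne : p ≠ b := fun h => hbS (h ▸ hpSf)
    have hdnnpos : 0 < dnn b (L.take ib).toFinset := by
      rw [dnn, hpd]
      exact dist_pos.2 (fun h => hpne (h.symm))
    -- β ≤ dne over prefix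
    have hsub : {x ∈ ((L.take ib).toFinset : Set X) | l x ≠ l b} ⊆ {x ∈ (P : Set X) | l x ≠ l b} := by
      rintro x ⟨hx, hlx⟩
      exact ⟨hLP x (List.mem_of_mem_take (by simpa using hx)), hlx⟩
    have hne' : ({x ∈ ((L.take ib).toFinset : Set X) | l x ≠ l b}).Nonempty :=
      ⟨e, by simpa using heS, hel⟩
    have hmono : dne l (l b) b P ≤ dne l (l b) b (L.take ib).toFinset :=
      Metric.infDist_le_infDist_of_subset hsub hne'
    have hβle : β ≤ dne l (l b) b (L.take ib).toFinset := le_trans hdneb hmono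
    have hkey : dne l (l b) b (L.take ib).toFinset < (1 + α) * dnn b (L.take ib).toFinset := by
      have := (div_lt_iff₀ hdnnpos).1 (by linarith : dne l (l b) b (L.take ib).toFinset / dnn b (L.take ib).toFinset < 1 + α)
      linarith
    rw [div_le_iff₀ h1α]
    have : β < dist a b * (1 + α) := by
      calc β ≤ dne l (l b) b (L.take ib).toFinset := hβle
        _ < (1 + α) * dnn b (L.take ib).toFinset := hkey
        _ ≤ (1 + α) * dist b a := by nlinarith
        _ = dist a b * (1 + α) := by rw [dist_comm]; ring
    linarith
  · -- p is an enemy of b in P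
    have hmem : p ∈ {x ∈ (P : Set X) | l x ≠ l b} := ⟨by simpa using hpP, fun h => hlab h.symm⟩
    have : dne l (l b) b P ≤ dist b p := Metric.infDist_le_dist_of_mem hmem
    have hβd : β ≤ dist a b := by
      rw [dist_comm]
      calc β ≤ dne l (l b) b P := hdneb
        _ ≤ dist b p := this
        _ = dnn b (L.take ib).toFinset := hpd.symm
        _ ≤ dist b a := hdnnle
    calc β / (1 + α) ≤ β := div_le_self hβ (by linarith)
      _ ≤ dist a b := hβd

/-- separation property of the α-SFCNN selection. The list L
records the points of P in the order they are added to R by α-SFCNN; the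
selection rule (hstep) says that a point q whose nearest neighbor p in the
current subset has q's own label may only be added if the current subset
contains an enemy of q and q's chromatic density w.r.t. the current subset is
less than α. Then any two distinct selected points with nearest-enemy distance
at least β are at distance at least β/(1+α). -/
theorem stmt17 [DecidableEq X] (l : X → ℕ) (P : Finset X) (α β : ℝ) (L : List X)
    (hα : 0 ≤ α) (hβ : 0 ≤ β)
    (hLP : ∀ x ∈ L, x ∈ P) (hnd : L.Nodup)
    (hstep : ∀ (i : ℕ) (hi : i < L.length),
      ∀ p ∈ (L.take i).toFinset,
        dist (L.get ⟨i, hi⟩) p = dnn (L.get ⟨i, hi⟩) (L.take i).toFinset →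
        l (L.get ⟨i, hi⟩) = l p →
          (∃ e ∈ (L.take i).toFinset, l e ≠ l (L.get ⟨i, hi⟩)) ∧
          dne l (l (L.get ⟨i, hi⟩)) (L.get ⟨i, hi⟩) (L.take i).toFinset /
              dnn (L.get ⟨i, hi⟩) (L.take i).toFinset - 1 < α)
    (a b : X) (ha : a ∈ L) (hb : b ∈ L) (hab : a ≠ b)
    (hdnea : β ≤ dne l (l a) a P) (hdneb : β ≤ dne l (l b) b P) :
    β / (1 + α) ≤ dist a b := by
  rcases lt_or_gt_of_ne (fun h : L.idxOf a = L.idxOf b => hab (by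
    have h1 := List.getElem_idxOf (List.idxOf_lt_length_iff.2 ha)
    have h2 := List.getElem_idxOf (List.idxOf_lt_length_iff.2 hb)
    rw [← h1, ← h2]; simp [h])) with hord | hord
  · exact stmt17_aux l P α β L hα hβ hLP hnd hstep a b ha hb hab hdneb hord
  · rw [dist_comm]
    exact stmt17_aux l P α β L hα hβ hLP hnd hstep b a hb ha hab.symm hdnea hord
end
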